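/- arXiv:1710.03979 — 4 statements merged into one kernel-verified Lean document; each statement's English description precedes it below -/
import Mathlib

section
/- For a nonempty index set I and families of predicates p_i and relations r_i, the fusion of the family of transformers {p_i} ∘ [r_i] equals {⋂_i p_i} ∘ [⋂_i r_i]. -/
def assertPT {α : Type*} (p : Set α) : Set α → Set α := fun q => p ∩ q

def demonic {α β : Type*} (r : α → β → Prop) : Set β → Set α :=
  fun q => {σ | ∀ σ', r σ σ' → σ' ∈ q}

def Fusion {ι X Y : Type*} (S : ι → (Set Y → Set X)) : Set Y → Set X :=
  fun q => {σ | ∃ p : ι → Set Y, (⋂ i, p i) ⊆ q ∧ σ ∈ ⋂ i, S i (p i)}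

/-- for nonempty I, Fusion_i ({p_i} ∘ [r_i]) = {⋂ p_i} ∘ [⋂ r_i]. -/
theorem fusion_assert_demonic {ι X Y : Type*} [Nonempty ι]
    (p : ι → Set X) (r : ι → X → Y → Prop) :
    Fusion (fun i => assertPT (p i) ∘ demonic (r i)) =
      assertPT (⋂ i, p i) ∘ demonic (fun σ σ' => ∀ i, r i σ σ') := by
  funext q
  ext σ
  simp only [Fusion, assertPT, demonic, Function.comp, Set.mem_setOf_eq,
    Set.mem_inter_iff, Set.mem_iInter]
  constructor
  · rintro ⟨P, hsub, h⟩
    refine ⟨fun i => (h i).1, fun σ' hσ' => hsub ?_⟩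
    exact Set.mem_iInter.2 fun i => (h i).2 σ' (hσ' i)
  · rintro ⟨hp, hr⟩
    exact ⟨fun i => {σ' | r i σ σ'}, fun σ' hσ' => hr σ' fun i =>
      Set.mem_iInter.1 hσ' i, fun i => ⟨hp i, fun σ' h => h⟩⟩
end

section
/- The product of two relational property transformers is relational: ({p} ∘ [r]) ⊗ ({p'} ∘ [r']) = {(σx, σy) | p σx ∧ p' σy} ∘ [(σx,σy) ↝ (σx',σy') | r σx σx' ∧ r' σy σy']. -/
def prodPred {α β : Type*} (p : Set α) (p' : Set β) : Set (α × β) :=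
  {ab | ab.1 ∈ p ∧ ab.2 ∈ p'}

def ptProduct {X Y U V : Type*} (S : Set Y → Set X) (T : Set V → Set U) :
    Set (Y × V) → Set (X × U) :=
  fun q => {σ | ∃ (p : Set Y) (p' : Set V),
    prodPred p p' ⊆ q ∧ σ.1 ∈ S p ∧ σ.2 ∈ T p'}

/-- product of RPTs is an RPT. -/
theorem rpt_product {X X' Y Y' : Type*} (p : Set X) (r : X → X' → Prop)
    (p' : Set Y) (r' : Y → Y' → Prop) :
    ptProduct (assertPT p ∘ demonic r) (assertPT p' ∘ demonic r') =
      assertPT {σ : X × Y | σ.1 ∈ p ∧ σ.2 ∈ p'} ∘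
        demonic (fun (σ : X × Y) (σ' : X' × Y') => r σ.1 σ'.1 ∧ r' σ.2 σ'.2) := by
  funext q
  ext σ
  constructor
  · rintro ⟨p₁, p₂, hsub, ⟨hp1, hd1⟩, ⟨hp2, hd2⟩⟩
    exact ⟨⟨hp1, hp2⟩, fun σ' ⟨h1, h2⟩ => hsub ⟨hd1 σ'.1 h1, hd2 σ'.2 h2⟩⟩
  · rintro ⟨⟨hp1, hp2⟩, hd⟩
    exact ⟨{x' | r σ.1 x'}, {y' | r' σ.2 y'},
      fun ab ⟨h1, h2⟩ => hd ab ⟨h1, h2⟩,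
      ⟨hp1, fun _ h => h⟩, ⟨hp2, fun _ h => h⟩⟩
end

section
/- The fusion of two relational property transformers is relational: Fusion({p} ∘ [r], {p'} ∘ [r']) = {p ∧ p'} ∘ [r ∧ r']. -/
def Fusion2 {X Y : Type*} (S T : Set Y → Set X) : Set Y → Set X :=
  fun q => {σ | ∃ q₁ q₂ : Set Y, q₁ ∩ q₂ ⊆ q ∧ σ ∈ S q₁ ∧ σ ∈ T q₂}

/-- fusion of RPTs is an RPT: Fusion({p}∘[r], {p'}∘[r']) = {p ∧ p'} ∘ [r ∧ r']. -/
theorem rpt_fusion {X Y : Type*} (p p' : Set X) (r r' : X → Y → Prop) :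
    Fusion2 (assertPT p ∘ demonic r) (assertPT p' ∘ demonic r') =
      assertPT (p ∩ p') ∘ demonic (fun σ σ' => r σ σ' ∧ r' σ σ') := by
  funext q
  ext σ
  simp only [Fusion2, assertPT, demonic, Set.mem_setOf_eq, Set.mem_inter_iff,
    Function.comp_apply]
  constructor
  · rintro ⟨q₁, q₂, hsub, ⟨hp, h1⟩, ⟨hp', h2⟩⟩
    exact ⟨⟨hp, hp'⟩, fun σ' ⟨hr, hr'⟩ => hsub ⟨h1 σ' hr, h2 σ' hr'⟩⟩
  · rintro ⟨⟨hp, hp'⟩, h⟩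
    exact ⟨{σ' | r σ σ'}, {σ' | r' σ σ'},
      fun σ' ⟨h1, h2⟩ => h σ' ⟨h1, h2⟩, ⟨hp, fun _ h => h⟩, ⟨hp', fun _ h => h⟩⟩
end

section
/- The serial composition of two guarded property transformers {r] and {r'] equals the guarded transformer of the relation λ σx σz, in(r)(σx) ∧ (∀ σy: r σx σy → in(r')(σy)) ∧ (r ∘ r')(σx)(σz). -/
def inRel {α β : Type*} (r : α → β → Prop) : Set α := {σ | ∃ σ', r σ σ'}

def guarded {α β : Type*} (r : α → β → Prop) : Set β → Set α :=
  assertPT (inRel r) ∘ demonic r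

def relComp {α β γ : Type*} (r : α → β → Prop) (r' : β → γ → Prop) : α → γ → Prop :=
  fun σ σ'' => ∃ σ', r σ σ' ∧ r' σ' σ''

/-- serial composition of GPTs is a GPT. -/
theorem gpt_serial {X Y Z : Type*} (r : X → Y → Prop) (r' : Y → Z → Prop) :
    guarded r ∘ guarded r' =
      guarded (fun σx σz =>
        σx ∈ inRel r ∧ (∀ σy, r σx σy → σy ∈ inRel r') ∧ relComp r r' σx σz) := by
  funext q
  ext σ
  simp only [guarded, assertPT, demonic, inRel, relComp, Function.comp,
    Set.mem_inter_iff, Set.mem_setOf_eq]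
  constructor
  · rintro ⟨⟨σy, hy⟩, h⟩
    obtain ⟨⟨σz, hz⟩, -⟩ := h σy hy
    refine ⟨⟨σz, ⟨σy, hy⟩, fun σy' hy' => (h σy' hy').1, σy, hy, hz⟩, ?_⟩
    rintro σz' ⟨-, -, σy', hy', hz'⟩
    exact (h σy' hy').2 σz' hz'
  · rintro ⟨⟨σz, hin, hall, -⟩, hq⟩
    exact ⟨hin, fun σy hy => ⟨hall σy hy, fun σz' hz' =>
      hq σz' ⟨hin, hall, σy, hy, hz'⟩⟩⟩
end
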